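/- Let βℕ denote the Stone–Čech compactification of the discrete space ℕ, with ι : ℕ → βℕ the canonical embedding, let C(βℕ) be the Banach space of continuous real-valued functions on βℕ with the supremum norm, and let y ∈ βℕ \ ι(ℕ) be a fixed point. Then the linear subspace Y = {f ∈ C(βℕ) : f(y) = 0} of C(βℕ) is somewhat regular. -/
import Mathlib

/-- A linear subspace `𝒜` of `C(K, ℝ)` (`K` compact Hausdorff, so `C(K) = C₀(K)`) is
*somewhat regular* if for every non-empty open subset `V` of `K` and every `ε` with
`0 < ε < 1` there is `f ∈ 𝒜` with `‖f‖ = 1` and `|f x| ≤ ε` for every `x ∈ K \ V`. -/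
def SomewhatRegularC {K : Type*} [TopologicalSpace K] [CompactSpace K]
    (𝒜 : Submodule ℝ C(K, ℝ)) : Prop :=
  ∀ V : Set K, IsOpen V → V.Nonempty → ∀ ε : ℝ, 0 < ε → ε < 1 →
    ∃ f ∈ 𝒜, ‖f‖ = 1 ∧ ∀ x ∉ V, |f x| ≤ ε

/-- The subspace `Y = {f ∈ C(βℕ) : f(y) = 0}` of `C(βℕ)` for a fixed point `y`. -/
def vanishingAtPoint (y : StoneCech ℕ) : Submodule ℝ C(StoneCech ℕ, ℝ) where
  carrier := {f : C(StoneCech ℕ, ℝ) | f y = 0}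
  add_mem' := by
    intro a b ha hb
    simp only [Set.mem_setOf_eq] at *
    simp [ha, hb]
  zero_mem' := by simp
  smul_mem' := by
    intro c f hf
    simp only [Set.mem_setOf_eq] at *
    simp [hf]

/-- For a fixed `y ∈ βℕ \ ι(ℕ)`, the subspace `Y = {f ∈ C(βℕ) : f(y) = 0}` of `C(βℕ)`
is somewhat regular. -/
theorem vanishingAtPoint_somewhatRegular
    (y : StoneCech ℕ) (hy : y ∉ Set.range (stoneCechUnit : ℕ → StoneCech ℕ)) :
    SomewhatRegularC (vanishingAtPoint y) := by
  intro V hV hVne ε hε0 hε1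
  obtain ⟨n, hnV⟩ := denseRange_stoneCechUnit.exists_mem_open hV hVne
  -- extend the indicator of {n} to βℕ
  set g : ℕ → Bool := fun m => decide (m = n) with hg
  have hgc : Continuous g := continuous_of_discreteTopology
  set h : StoneCech ℕ → Bool := stoneCechExtend hgc with hh
  have hhc : Continuous h := continuous_stoneCechExtend hgc
  have hunit : ∀ m, h (stoneCechUnit m) = g m := fun m =>
    congrFun (stoneCechExtend_extends hgc) m
  -- the set where h = true is exactly {ι n}
  have hU : {x | h x = true} = {stoneCechUnit n} := by
    apply Set.Subset.antisymm
    · have hopen : IsOpen {x | h x = true} :=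
        (isOpen_discrete {true}).preimage hhc
      have hsub : {x | h x = true} ⊆
          closure ({x | h x = true} ∩ Set.range stoneCechUnit) :=
        denseRange_stoneCechUnit.open_subset_closure_inter hopen
      have hinter : {x | h x = true} ∩ Set.range stoneCechUnit
          ⊆ {stoneCechUnit n} := by
        rintro x ⟨hx, m, rfl⟩
        have : g m = true := by rw [← hunit]; exact hx
        simp only [hg, decide_eq_true_eq] at this
        simp [this]
      calc {x | h x = true}
          ⊆ closure ({x | h x = true} ∩ Set.range stoneCechUnit) := hsub
        _ ⊆ closure {stoneCechUnit n} := closure_mono hinter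
        _ = {stoneCechUnit n} := closure_singleton
    · intro x hx
      simp only [Set.mem_singleton_iff] at hx
      subst hx
      show h (stoneCechUnit n) = true
      rw [hunit]; simp [hg]
  -- the candidate function
  set F : C(StoneCech ℕ, ℝ) :=
    ⟨fun x => if h x then (1 : ℝ) else 0,
     (continuous_of_discreteTopology (f := fun b : Bool => if b then (1:ℝ) else 0)).comp hhc⟩
    with hF
  have hFn : F (stoneCechUnit n) = 1 := by
    have : h (stoneCechUnit n) = true := by rw [hunit]; simp [hg]
    simp [hF, this]
  have hFother : ∀ x, x ≠ stoneCechUnit n → F x = 0 := by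
    intro x hx
    have : h x ≠ true := by
      intro hxt
      exact hx (by have := hU ▸ (Set.mem_setOf_eq ▸ hxt : x ∈ {x | h x = true}); simpa using this)
    simp only [Bool.not_eq_true] at this
    simp [hF, this]
  refine ⟨F, ?_, ?_, ?_⟩
  · -- F y = 0
    exact hFother y (fun hxy => hy ⟨n, hxy.symm⟩)
  · -- norm 1
    apply le_antisymm
    · apply ContinuousMap.norm_le F zero_le_one |>.mpr
      intro x
      by_cases hx : x = stoneCechUnit n
      · subst hx; rw [hFn]; simp
      · rw [hFother x hx]; simp
    · calc (1 : ℝ) = ‖F (stoneCechUnit n)‖ := by rw [hFn]; simp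
        _ ≤ ‖F‖ := F.norm_coe_le_norm _
  · intro x hxV
    have hx : x ≠ stoneCechUnit n := fun hx => hxV (hx ▸ hnV)
    rw [hFother x hx]
    simpa using hε0.le
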